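/- Let A, B, a, b be positive integers with a ≥ 2 and A ≤ 2B. Then A·(d₂ + c₂·log₂(a − 1)) + A + B ≤ (A + B)·(d₂ − 1 + c₂·log₂(a + b)), where c₂ = 3/log₂(27/4) and d₂ = 6 − c₂·(3·log₂ 3 − 1). -/

import Mathlib

open Real

/-- The constant `c₂ = 3 / log₂(27/4)`. -/
noncomputable def c2 : ℝ := 3 / logb 2 (27 / 4)

/-- The constant `d₂ = 6 − c₂·(3·log₂ 3 − 1)`. -/
noncomputable def d2 : ℝ := 6 - c2 * (3 * logb 2 3 - 1)

/-!
Put `x = a - 1` and `y = a + b`, so `x ≥ 1` and `y ≥ x + 2`. Twice the difference of the two sides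
is `A·(d₂ + c₂·(3 log₂ y − 2 log₂ x) − 6) + (2B − A)·(d₂ + c₂ log₂ y − 2)`. By the definition of
`d₂` the first bracket is `c₂ log₂ (2y³ / 27x²) ≥ 0`, since `2 (x + 2)³ − 27 x² = (x − 4)² (2x + 1)`.
The second is nonnegative because `y ≥ 3` and `log₂ 3 > 5/6`.
-/

lemma one_lt_logb_two_three : 1 < logb 2 3 := by
  rw [Real.lt_logb_iff_rpow_lt (by norm_num) (by norm_num)]
  norm_num

lemma logb_two_twentySeven_div_four : logb 2 (27 / 4) = 3 * logb 2 3 - 2 := by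
  rw [show (27 : ℝ) / 4 = 3 ^ 3 / 2 ^ 2 by norm_num, Real.logb_div (by norm_num) (by norm_num),
    Real.logb_pow, Real.logb_pow, Real.logb_self_eq_one (by norm_num)]
  ring

lemma c2_mul_eq_three : c2 * (3 * logb 2 3 - 2) = 3 := by
  have := one_lt_logb_two_three
  rw [c2, logb_two_twentySeven_div_four]
  field_simp [show 3 * logb 2 3 - 2 ≠ 0 by linarith]

lemma c2_pos : 0 < c2 := by
  have := one_lt_logb_two_three
  rw [c2, logb_two_twentySeven_div_four]
  exact div_pos (by norm_num) (by linarith)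

lemma two_le_d2_add_c2_mul_logb {y : ℝ} (hy : 3 ≤ y) : 2 ≤ d2 + c2 * logb 2 y := by
  have hL := one_lt_logb_two_three
  have hc := c2_mul_eq_three
  have hmono : c2 * logb 2 3 ≤ c2 * logb 2 y :=
    mul_le_mul_of_nonneg_left (Real.logb_le_logb_of_le (by norm_num) (by norm_num) hy) c2_pos.le
  -- using `c₂ (3 log₂ 3 - 2) = 3`, `d₂ + c₂ log₂ 3 - 2 = c₂ (6 log₂ 3 - 5) / 3`
  rw [d2]
  linarith [c2_pos, mul_pos c2_pos (show 0 < logb 2 3 - 1 by linarith)]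

lemma mul_sq_le_two_mul_cube {x y : ℝ} (hx : 0 ≤ x) (hxy : x + 2 ≤ y) :
    27 * x ^ 2 ≤ 2 * y ^ 3 :=
  calc 27 * x ^ 2 ≤ 27 * x ^ 2 + (x - 4) ^ 2 * (2 * x + 1) := by
        have : 0 ≤ (x - 4) ^ 2 * (2 * x + 1) := by positivity
        linarith
    _ = 2 * (x + 2) ^ 3 := by ring
    _ ≤ 2 * y ^ 3 := by gcongr

lemma three_mul_logb_three_sub_one_le {x y : ℝ} (hx : 0 < x) (hxy : x + 2 ≤ y) :
    3 * logb 2 3 - 1 ≤ 3 * logb 2 y - 2 * logb 2 x := by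
  have hy : 0 < y := by linarith
  have h := Real.logb_le_logb_of_le (b := 2) (by norm_num) (by positivity)
    (mul_sq_le_two_mul_cube hx.le hxy)
  rw [show (27 : ℝ) = 3 ^ 3 by norm_num, Real.logb_mul (by positivity) (by positivity),
    Real.logb_mul (by norm_num) (by positivity), Real.logb_pow, Real.logb_pow, Real.logb_pow,
    Real.logb_self_eq_one (by norm_num)] at h
  push_cast at h
  linarith

lemma six_le_d2_add_c2_mul_logb {x y : ℝ} (hx : 0 < x) (hxy : x + 2 ≤ y) :
    6 ≤ d2 + c2 * (3 * logb 2 y - 2 * logb 2 x) := by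
  have := mul_le_mul_of_nonneg_left (three_mul_logb_three_sub_one_le hx hxy) c2_pos.le
  rw [d2]
  linarith

theorem alphamerge_C_two_general (A B a b : ℕ)
    (ha : 2 ≤ a) (hb : 0 < b)
    (h1 : A ≤ 2 * B) :
    (A : ℝ) * (d2 + c2 * logb 2 ((a : ℝ) - 1)) + A + B
      ≤ ((A : ℝ) + B) * (d2 - 1 + c2 * logb 2 ((a : ℝ) + b)) := by
  have ha' : (2 : ℝ) ≤ a := by exact_mod_cast ha
  have hb' : (1 : ℝ) ≤ b := by exact_mod_cast hb
  have hAB : (A : ℝ) ≤ 2 * B := by exact_mod_cast h1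
  have hF := six_le_d2_add_c2_mul_logb (x := (a : ℝ) - 1) (y := a + b) (by linarith) (by linarith)
  have hG := two_le_d2_add_c2_mul_logb (y := (a : ℝ) + b) (by linarith)
  linarith [mul_le_mul_of_nonneg_left hF (Nat.cast_nonneg A),
    mul_le_mul_of_nonneg_left hG (show 0 ≤ 2 * (B : ℝ) - A by linarith)]

/-- Lemma 7(a): if `a ≥ 2` and `A ≤ 2B` then
`A·(d₂ + c₂·log(a−1)) + A + B ≤ (A+B)·(d₂ − 1 + c₂·log(a+b))`. -/
theorem alphamerge_C_two (A B a b : ℕ)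
    (hA : 0 < A) (hB : 0 < B) (ha : 2 ≤ a) (hb : 0 < b)
    (h1 : A ≤ 2 * B) :
    (A : ℝ) * (d2 + c2 * logb 2 ((a : ℝ) - 1)) + A + B
      ≤ ((A : ℝ) + B) * (d2 - 1 + c2 * logb 2 ((a : ℝ) + b)) :=
  alphamerge_C_two_general A B a b ha hb h1
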